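/- arXiv:1402.3560 — 2 statements merged into one kernel-verified Lean document; each statement's English description precedes it below -/
import Mathlib

section
/- Under the technical condition p − a + ρb(μ−r)/σ > λγ, the equation (1−γκ)^(α−1) + B₁(1−γκ) + C₁ = 0, with B₁ = (α−1)b²(1−ρ²)/(λγ²) and C₁ = −(1/(λγ))[p−a+ρb(μ−r)/σ + (α−1)b²(1−ρ²)/γ], has a unique solution κ ∈ (0, 1/γ). -/
/-!
With `φ = 1 - γκ` the equation reads `g φ = 0` for `g φ = φ ^ (α - 1) + B₁ φ + C₁`. Since
`α - 1 < 0` and `B₁ ≤ 0`, `g` is strictly decreasing on `(0, ∞)`. The technical condition says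
exactly that `g 1 = 1 + B₁ + C₁ < 0`, while at the point `φ₀ < 1` where `φ₀ ^ (α - 1) = -(B₁ + C₁)`
one has `g φ₀ = B₁ (φ₀ - 1) ≥ 0`; the intermediate value theorem gives the root.
-/

open Set Real

section RpowAddLinear

variable {e B C : ℝ}

lemma strictAntiOn_rpow_add_mul_add (he : e < 0) (hB : B ≤ 0) :
    StrictAntiOn (fun φ : ℝ => φ ^ e + B * φ + C) (Ioi 0) := by
  intro x hx y _ hxy
  have hpow : y ^ e < x ^ e := rpow_lt_rpow_of_neg hx hxy he
  have hlin : B * y ≤ B * x := mul_le_mul_of_nonpos_left hxy.le hB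
  simp only
  linarith

lemma exists_rpow_add_mul_add_eq_zero (he : e < 0) (hB : B ≤ 0) (hBC : 1 + B + C < 0) :
    ∃ φ ∈ Ioo (0 : ℝ) 1, φ ^ e + B * φ + C = 0 := by
  set c := -(B + C)
  have hc : 1 < c := by linarith
  set φ₀ := c ^ e⁻¹
  have hφ₀_pos : 0 < φ₀ := rpow_pos_of_pos (by linarith) _
  have hφ₀_lt : φ₀ < 1 := rpow_lt_one_of_one_lt_of_neg hc (inv_lt_zero.mpr he)
  have hφ₀_pow : φ₀ ^ e = c := rpow_inv_rpow (by linarith) he.ne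
  have hcont : ContinuousOn (fun φ : ℝ => φ ^ e + B * φ + C) (Icc φ₀ 1) := by
    refine ContinuousOn.add (ContinuousOn.add ?_ (continuousOn_const.mul continuousOn_id))
      continuousOn_const
    exact ContinuousOn.rpow_const continuousOn_id fun x hx => Or.inl (hφ₀_pos.trans_le hx.1).ne'
  have hzero_mem : (0 : ℝ) ∈ Icc (1 ^ e + B * 1 + C) (φ₀ ^ e + B * φ₀ + C) := by
    constructor
    · rw [one_rpow]; linarith
    · rw [hφ₀_pow]; nlinarith
  obtain ⟨φ, hφ, hφ_root⟩ := intermediate_value_Icc' hφ₀_lt.le hcont hzero_mem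
  refine ⟨φ, ⟨hφ₀_pos.trans_le hφ.1, hφ.2.lt_of_ne ?_⟩, hφ_root⟩
  rintro rfl
  simp only [one_rpow, mul_one] at hφ_root
  linarith

lemma existsUnique_rpow_add_mul_add_eq_zero (he : e < 0) (hB : B ≤ 0) (hBC : 1 + B + C < 0) :
    ∃! φ, φ ∈ Ioo (0 : ℝ) 1 ∧ φ ^ e + B * φ + C = 0 := by
  obtain ⟨φ, hφ, hφ_root⟩ := exists_rpow_add_mul_add_eq_zero he hB hBC
  refine ⟨φ, ⟨hφ, hφ_root⟩, fun ψ ⟨hψ, hψ_root⟩ => ?_⟩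
  exact (strictAntiOn_rpow_add_mul_add he hB).injOn hψ.1 hφ.1 (hψ_root.trans hφ_root.symm)

end RpowAddLinear

lemma existsUnique_Ioo_one_div_of_one_sub_mul {γ : ℝ} (hγ : 0 < γ) {P : ℝ → Prop}
    (h : ∃! φ, φ ∈ Ioo (0 : ℝ) 1 ∧ P φ) :
    ∃! κ, κ ∈ Ioo (0 : ℝ) (1 / γ) ∧ P (1 - γ * κ) := by
  have hmem : ∀ κ, κ ∈ Ioo (0 : ℝ) (1 / γ) ↔ 1 - γ * κ ∈ Ioo (0 : ℝ) 1 := by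
    intro κ
    simp only [mem_Ioo, lt_div_iff₀ hγ, sub_pos, sub_lt_self_iff, mul_comm κ γ]
    exact ⟨fun ⟨h0, h1⟩ => ⟨h1, mul_pos hγ h0⟩,
      fun ⟨h1, h0⟩ => ⟨pos_of_mul_pos_right h0 hγ.le, h1⟩⟩
  obtain ⟨φ, ⟨hφ, hPφ⟩, huniq⟩ := h
  have hinv : 1 - γ * ((1 - φ) / γ) = φ := by field_simp; ring
  refine ⟨(1 - φ) / γ, ⟨(hmem _).mpr (by rwa [hinv]), by rwa [hinv]⟩, fun κ ⟨hκ, hPκ⟩ => ?_⟩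
  have hκφ : 1 - γ * κ = φ := huniq _ ⟨(hmem κ).mp hκ, hPκ⟩
  field_simp
  linarith

theorem power_utility_unique_kappa_general (α b lam γ ρ σ μ r p a : ℝ)
    (hα : α ∈ Set.Ioo (0 : ℝ) 1) (hlam : 0 < lam) (hγ : 0 < γ)
    (hρ : ρ ∈ Set.Ioo (-1 : ℝ) 0)
    (htech : p - a + ρ*b*(μ - r)/σ > lam*γ) :
    ∃! κ : ℝ, κ ∈ Set.Ioo (0 : ℝ) (1/γ) ∧
      (1 - γ*κ) ^ (α - 1)
        + ((α - 1)*b^2*(1 - ρ^2)/(lam*γ^2)) * (1 - γ*κ)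
        + (-(1/(lam*γ)) * (p - a + ρ*b*(μ - r)/σ + (α - 1)*b^2*(1 - ρ^2)/γ)) = 0 := by
  set T := p - a + ρ*b*(μ - r)/σ
  have hlamγ : 0 < lam * γ := mul_pos hlam hγ
  have hB : (α - 1)*b^2*(1 - ρ^2)/(lam*γ^2) ≤ 0 := by
    have hρ2 : 0 ≤ 1 - ρ^2 := by nlinarith [hρ.1, hρ.2]
    have : (α - 1)*b^2*(1 - ρ^2) ≤ 0 :=
      mul_nonpos_of_nonpos_of_nonneg
        (mul_nonpos_of_nonpos_of_nonneg (by linarith [hα.2]) (sq_nonneg b)) hρ2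
    exact div_nonpos_of_nonpos_of_nonneg this (by positivity)
  have hBC : 1 + (α - 1)*b^2*(1 - ρ^2)/(lam*γ^2)
      + -(1/(lam*γ)) * (T + (α - 1)*b^2*(1 - ρ^2)/γ) < 0 := by
    have hsum : (α - 1)*b^2*(1 - ρ^2)/(lam*γ^2)
        + -(1/(lam*γ)) * (T + (α - 1)*b^2*(1 - ρ^2)/γ) = -(T / (lam*γ)) := by
      field_simp; ring
    have : 1 < T / (lam*γ) := (one_lt_div hlamγ).mpr htech
    linarith
  exact existsUnique_Ioo_one_div_of_one_sub_mul hγ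
    (existsUnique_rpow_add_mul_add_eq_zero (by linarith [hα.2]) hB hBC)

theorem power_utility_unique_kappa (α b lam γ ρ σ μ r p a : ℝ)
    (hα : α ∈ Set.Ioo (0 : ℝ) 1) (hb : 0 < b) (hlam : 0 < lam) (hγ : 0 < γ)
    (hρ : ρ ∈ Set.Ioo (-1 : ℝ) 0) (hσ : 0 < σ) (hr : 0 ≤ r) (hμ : r < μ)
    (hpa : a < p)
    (htech : p - a + ρ*b*(μ - r)/σ > lam*γ) :
    ∃! κ : ℝ, κ ∈ Set.Ioo (0 : ℝ) (1/γ) ∧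
      (1 - γ*κ) ^ (α - 1)
        + ((α - 1)*b^2*(1 - ρ^2)/(lam*γ^2)) * (1 - γ*κ)
        + (-(1/(lam*γ)) * (p - a + ρ*b*(μ - r)/σ + (α - 1)*b^2*(1 - ρ^2)/γ)) = 0 :=
  power_utility_unique_kappa_general α b lam γ ρ σ μ r p a hα hlam hγ hρ htech
end

section
/- If a strictly positive solution κ* ∈ [0, 1/γ) to the first-order conditions exists under the technical condition C(t) > 0, then it equals the smaller root κ₋(t) = (B(t) − √Δ(t))/(2A), and moreover the resulting investment proportion π*(t) = (μ(t)−r(t)+ρbσ(t)κ*(t))/σ²(t) is a bounded function of t whenever μ, r, σ are bounded and σ is bounded away from 0. -/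
/-!
Write the first-order condition as `q(κ) = A κ² - B κ + C = 0`. Substituting the definitions of
`A` and `B` gives `q(1/γ) = -λγ ≤ 0`, so `1/γ` lies between the two roots of `q`. Hence a root
below `1/γ` can only be the smaller one, and since `q(0) = C > 0` the smaller root lies in
`[0, 1/γ]`. With `κ` confined to that interval, the numerator of `π*` is at most
`Mb + b Mb / γ` in absolute value and its denominator is at least `σ₀²`.
-/

noncomputable def smallerRoot (A B C : ℝ) : ℝ :=
  (B - Real.sqrt (B ^ 2 - 4 * A * C)) / (2 * A)

section smallerRoot

variable {A B C g : ℝ}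

theorem eq_smallerRoot_of_lt (hA : 0 < A) (hg : A * g ^ 2 - B * g + C ≤ 0) {κ : ℝ}
    (hκg : κ < g) (hκ : A * κ ^ 2 - B * κ + C = 0) : κ = smallerRoot A B C := by
  have hB : 2 * A * κ ≤ B := by
    -- `q(g) - q(κ) = (g - κ) (A (g + κ) - B)`
    have h : (g - κ) * (A * (g + κ) - B) ≤ 0 := by linear_combination hg - hκ
    nlinarith [nonpos_of_mul_nonpos_right h (sub_pos.mpr hκg)]
  have hΔ : B ^ 2 - 4 * A * C = (B - 2 * A * κ) ^ 2 := by linear_combination (-4 * A) * hκ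
  rw [smallerRoot, hΔ, Real.sqrt_sq (by linarith)]
  field_simp
  ring

theorem smallerRoot_mem_Icc (hA : 0 < A) (hC : 0 ≤ C) (hg₀ : 0 < g)
    (hg : A * g ^ 2 - B * g + C ≤ 0) : smallerRoot A B C ∈ Set.Icc 0 g := by
  have hB : 0 ≤ B := by nlinarith [mul_pos hA (mul_pos hg₀ hg₀)]
  have hΔ : (B - 2 * A * g) ^ 2 ≤ B ^ 2 - 4 * A * C := by nlinarith
  have hsqrt_le : Real.sqrt (B ^ 2 - 4 * A * C) ≤ B :=
    Real.sqrt_le_iff.mpr ⟨hB, by nlinarith [mul_nonneg hA.le hC]⟩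
  have hsqrt_ge : B - 2 * A * g ≤ Real.sqrt (B ^ 2 - 4 * A * C) :=
    (le_abs_self _).trans (Real.abs_le_sqrt hΔ)
  constructor
  · exact div_nonneg (by linarith) (by positivity)
  · rw [smallerRoot, div_le_iff₀ (by positivity)]
    linarith

end smallerRoot

theorem quadratic_at_inv_eq (u C lam : ℝ) {γ : ℝ} (hγ : γ ≠ 0) :
    (u * γ) * (1 / γ) ^ 2 - (u + γ * (C + lam * γ)) * (1 / γ) + C = -(lam * γ) := by
  field_simp
  ring

theorem abs_div_sq_le_of_bounds {e ρ b s s₀ M κ g : ℝ} (hb : 0 ≤ b) (hρ : |ρ| ≤ 1)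
    (hs₀ : 0 < s₀) (hs₀s : s₀ ≤ s) (hsM : s ≤ M) (he : |e| ≤ M) (hκ : κ ∈ Set.Icc 0 g) :
    |(e + ρ * b * s * κ) / s ^ 2| ≤ (M + b * M * g) / s₀ ^ 2 := by
  have hs : 0 < s := hs₀.trans_le hs₀s
  have hbsκ : b * s * κ ≤ b * M * g :=
    mul_le_mul (mul_le_mul_of_nonneg_left hsM hb) hκ.2 hκ.1 (mul_nonneg hb (hs.le.trans hsM))
  have hbsκ₀ : 0 ≤ b * s * κ := mul_nonneg (mul_nonneg hb hs.le) hκ.1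
  have hnum : |e + ρ * b * s * κ| ≤ M + b * M * g :=
    calc |e + ρ * b * s * κ| ≤ |e| + |ρ * (b * s * κ)| := by
          rw [← mul_assoc, ← mul_assoc]
          exact abs_add_le _ _
      _ = |e| + |ρ| * (b * s * κ) := by rw [abs_mul, abs_of_nonneg hbsκ₀]
      _ ≤ M + 1 * (b * M * g) := by gcongr
      _ = M + b * M * g := by ring
  rw [abs_div, abs_of_nonneg (sq_nonneg s)]
  exact div_le_div₀ ((abs_nonneg _).trans hnum) hnum (by positivity) (by gcongr)

theorem solution_is_smaller_root_and_pi_bounded_general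
    (b γ lam ρ p a T σ₀ Mb : ℝ) (μ r σ : ℝ → ℝ)
    (hb : 0 < b) (hγ : 0 < γ) (hlam : 0 < lam) (hρ : ρ ∈ Set.Ioo (-1 : ℝ) 1)
    (hσ₀ : 0 < σ₀)
    (hbdd : ∀ t ∈ Set.Icc (0 : ℝ) T,
      0 < r t ∧ r t < μ t ∧ μ t ≤ Mb ∧ σ₀ ≤ σ t ∧ σ t ≤ Mb)
    (hC : ∀ t ∈ Set.Icc (0 : ℝ) T,
      0 < p - a + ρ*b*(μ t - r t)/σ t - lam*γ) :
    (∀ t ∈ Set.Icc (0 : ℝ) T, ∀ κ : ℝ, 0 ≤ κ → κ < 1/γ →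
      (b^2*(1-ρ^2)*γ)*κ^2
        - (b^2*(1-ρ^2) + γ*((p - a + ρ*b*(μ t - r t)/σ t - lam*γ) + lam*γ))*κ
        + (p - a + ρ*b*(μ t - r t)/σ t - lam*γ) = 0 →
      κ = ((b^2*(1-ρ^2) + γ*((p - a + ρ*b*(μ t - r t)/σ t - lam*γ) + lam*γ))
            - Real.sqrt ((b^2*(1-ρ^2) + γ*((p - a + ρ*b*(μ t - r t)/σ t - lam*γ) + lam*γ))^2
                - 4*(b^2*(1-ρ^2)*γ)*(p - a + ρ*b*(μ t - r t)/σ t - lam*γ)))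
          / (2*(b^2*(1-ρ^2)*γ))) ∧
    (∃ M' : ℝ, ∀ t ∈ Set.Icc (0 : ℝ) T,
      |(μ t - r t + ρ*b*σ t *
          (((b^2*(1-ρ^2) + γ*((p - a + ρ*b*(μ t - r t)/σ t - lam*γ) + lam*γ))
            - Real.sqrt ((b^2*(1-ρ^2) + γ*((p - a + ρ*b*(μ t - r t)/σ t - lam*γ) + lam*γ))^2
                - 4*(b^2*(1-ρ^2)*γ)*(p - a + ρ*b*(μ t - r t)/σ t - lam*γ)))
          / (2*(b^2*(1-ρ^2)*γ)))) / (σ t)^2| ≤ M') := by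
  have hρ_abs : |ρ| < 1 := abs_lt.mpr hρ
  have hA : 0 < b ^ 2 * (1 - ρ ^ 2) * γ := by
    have := sub_pos.mpr ((sq_lt_one_iff_abs_lt_one ρ).mpr hρ_abs)
    positivity
  have hq_inv_nonpos (t : ℝ) :=
    (quadratic_at_inv_eq (b ^ 2 * (1 - ρ ^ 2)) (p - a + ρ*b*(μ t - r t)/σ t - lam*γ) lam
      hγ.ne').trans_le (neg_nonpos.mpr (mul_pos hlam hγ).le)
  refine ⟨fun t _ κ _ hκ hroot => eq_smallerRoot_of_lt hA (hq_inv_nonpos t) hκ hroot,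
    (Mb + b * Mb * (1 / γ)) / σ₀ ^ 2, fun t ht => ?_⟩
  obtain ⟨hr, hrμ, hμ, hσ₀σ, hσ⟩ := hbdd t ht
  exact abs_div_sq_le_of_bounds hb.le hρ_abs.le hσ₀ hσ₀σ hσ
    (abs_le.mpr ⟨by linarith, by linarith⟩)
    (smallerRoot_mem_Icc hA (hC t ht).le (by positivity) (hq_inv_nonpos t))

theorem solution_is_smaller_root_and_pi_bounded
    (b γ lam ρ p a T σ₀ Mb : ℝ) (μ r σ : ℝ → ℝ)
    (hb : 0 < b) (hγ : 0 < γ) (hlam : 0 < lam) (hρ : ρ ∈ Set.Ioo (-1 : ℝ) 1)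
    (hpa : a < p) (hT : 0 < T) (hσ₀ : 0 < σ₀)
    (hbdd : ∀ t ∈ Set.Icc (0 : ℝ) T,
      0 < r t ∧ r t < μ t ∧ μ t ≤ Mb ∧ σ₀ ≤ σ t ∧ σ t ≤ Mb)
    (hC : ∀ t ∈ Set.Icc (0 : ℝ) T,
      0 < p - a + ρ*b*(μ t - r t)/σ t - lam*γ) :
    (∀ t ∈ Set.Icc (0 : ℝ) T, ∀ κ : ℝ, 0 ≤ κ → κ < 1/γ →
      (b^2*(1-ρ^2)*γ)*κ^2
        - (b^2*(1-ρ^2) + γ*((p - a + ρ*b*(μ t - r t)/σ t - lam*γ) + lam*γ))*κ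
        + (p - a + ρ*b*(μ t - r t)/σ t - lam*γ) = 0 →
      κ = ((b^2*(1-ρ^2) + γ*((p - a + ρ*b*(μ t - r t)/σ t - lam*γ) + lam*γ))
            - Real.sqrt ((b^2*(1-ρ^2) + γ*((p - a + ρ*b*(μ t - r t)/σ t - lam*γ) + lam*γ))^2
                - 4*(b^2*(1-ρ^2)*γ)*(p - a + ρ*b*(μ t - r t)/σ t - lam*γ)))
          / (2*(b^2*(1-ρ^2)*γ))) ∧
    (∃ M' : ℝ, ∀ t ∈ Set.Icc (0 : ℝ) T,
      |(μ t - r t + ρ*b*σ t *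
          (((b^2*(1-ρ^2) + γ*((p - a + ρ*b*(μ t - r t)/σ t - lam*γ) + lam*γ))
            - Real.sqrt ((b^2*(1-ρ^2) + γ*((p - a + ρ*b*(μ t - r t)/σ t - lam*γ) + lam*γ))^2
                - 4*(b^2*(1-ρ^2)*γ)*(p - a + ρ*b*(μ t - r t)/σ t - lam*γ)))
          / (2*(b^2*(1-ρ^2)*γ)))) / (σ t)^2| ≤ M') :=
  solution_is_smaller_root_and_pi_bounded_general b γ lam ρ p a T σ₀ Mb μ r σ hb hγ hlam hρ hσ₀ hbdd
    hC
end
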